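/- arXiv:1004.1298 — 2 statements merged into one kernel-verified Lean document; each statement's English description precedes it below -/
import Mathlib

section
/- In the level-wise NFA built from a finite set G of generalized strings of length ℓ, within each level Q_i the languages of distinct states are pairwise disjoint. Proof proceeds by downward induction on i using that each state r ∈ Q_{i+1} reachable on a given character σ determines its parent uniquely via the Parent function. -/
open List Set

/-- The language of a state `q` of an NFA: strings leading from `q` to an accepting state. -/
def stateLang {α σ : Type} (M : NFA α σ) (q : σ) : Set (List α) :=
  {s | (M.evalFrom {q} s ∩ M.accept).Nonempty}

/-- A state is accessible if it is reachable from some start state on some string. -/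
def Accessible {α σ : Type} (M : NFA α σ) (q : σ) : Prop := ∃ s : List α, q ∈ M.eval s

/-- A simple NFA: all states accessible, all state languages nonempty and pairwise disjoint. -/
def IsSimple {α σ : Type} (M : NFA α σ) : Prop :=
  (∀ q : σ, Accessible M q) ∧ (∀ q : σ, (stateLang M q).Nonempty) ∧
  (∀ p q : σ, p ≠ q → Disjoint (stateLang M p) (stateLang M q))

/-- The automaton obtained by adding self-transitions (on every character) to all start states. -/
def loopNFA {α σ : Type} (M : NFA α σ) : NFA α σ where
  step q a := {x | x = q ∧ q ∈ M.start} ∪ M.step q a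
  start := M.start
  accept := M.accept

/-- The parent of a state `(H, k)` under character `a`:
`Parent ((H, k), a) = ({h ∈ H | a ∈ h[k]}, k - 1)`. -/
def Parent {α : Type} (p : Set (List (Set α)) × ℕ) (a : α) : Set (List (Set α)) × ℕ :=
  ({h ∈ p.1 | a ∈ h.getD (p.2 - 1) ∅}, p.2 - 1)

/-- `LevelAux G ℓ j` is the level `Q_{ℓ - j}`: `Q_ℓ = {(G, ℓ)}` and each higher level
consists of the nonempty parents of states of the level below. -/
def LevelAux {α : Type} (G : Set (List (Set α))) (ℓ : ℕ) : ℕ → Set (Set (List (Set α)) × ℕ)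
  | 0 => {(G, ℓ)}
  | j + 1 => {p | p.1.Nonempty ∧ ∃ q ∈ LevelAux G ℓ j, ∃ a : α, Parent q a = p}

/-- The level-wise NFA built from a set `G` of generalized strings of length `ℓ`:
transitions go from a state to those states of the next level whose parent it is,
the start states are the top level `Q_0` and the accepting state is `(G, ℓ)`. -/
def levelNFA {α : Type} (G : Set (List (Set α))) (ℓ : ℕ) :
    NFA α (Set (List (Set α)) × ℕ) where
  step p a := {q | p.2 < ℓ ∧ q ∈ LevelAux G ℓ (ℓ - (p.2 + 1)) ∧ Parent q a = p}
  start := LevelAux G ℓ ℓ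
  accept := {(G, ℓ)}

/-! The languages of two states are disjoint once the states are not both accepting and, on
every letter, their successors have pairwise disjoint languages. In the level-wise NFA a
successor `r` on the letter `a` determines its predecessor as `Parent r a`, so distinct states of
a level have distinct successors, which lie in the next level; downward induction from the single
state of `Q_ℓ` then gives the claim. -/

namespace NFA

variable {α σ : Type} (M : NFA α σ)

theorem nil_mem_stateLang {q : σ} : [] ∈ stateLang M q ↔ q ∈ M.accept := by
  simp [stateLang]

theorem cons_mem_stateLang {q : σ} {a : α} {t : List α} :
    a :: t ∈ stateLang M q ↔ ∃ r ∈ M.step q a, t ∈ stateLang M r := by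
  rw [stateLang, Set.mem_ofPred_eq, evalFrom_cons, stepSet_singleton,
    evalFrom_eq_biUnion_singleton, Set.iUnion₂_inter, Set.nonempty_biUnion]
  rfl

theorem disjoint_stateLang_of_step {p q : σ} (hq : q ∉ M.accept)
    (hstep : ∀ a, ∀ r ∈ M.step p a, ∀ r' ∈ M.step q a,
      Disjoint (stateLang M r) (stateLang M r')) :
    Disjoint (stateLang M p) (stateLang M q) := by
  rw [Set.disjoint_left]
  rintro (_ | ⟨a, t⟩) hp hq'
  · exact hq ((nil_mem_stateLang M).1 hq')
  · obtain ⟨r, hr, htr⟩ := (cons_mem_stateLang M).1 hp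
    obtain ⟨r', hr', htr'⟩ := (cons_mem_stateLang M).1 hq'
    exact Set.disjoint_left.1 (hstep a r hr r' hr') htr htr'

end NFA

section LevelNFA

variable {α : Type} {G : Set (List (Set α))} {ℓ : ℕ}

theorem snd_eq_of_mem_levelAux {j : ℕ} {p : Set (List (Set α)) × ℕ} (hp : p ∈ LevelAux G ℓ j) :
    p.2 = ℓ - j := by
  induction j generalizing p with
  | zero => simp [Set.mem_singleton_iff.1 hp]
  | succ j ih =>
    obtain ⟨-, q, hq, a, rfl⟩ := hp
    simp only [Parent, ih hq]
    omega

theorem levelNFA_notMem_accept {d : ℕ} (hd : d < ℓ) {p : Set (List (Set α)) × ℕ}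
    (hp : p ∈ LevelAux G ℓ (d + 1)) : p ∉ (levelNFA G ℓ).accept := by
  rintro rfl
  have := snd_eq_of_mem_levelAux hp
  omega

theorem mem_levelAux_of_mem_levelNFA_step {d : ℕ} (hd : d < ℓ) {p r : Set (List (Set α)) × ℕ}
    {a : α} (hp : p ∈ LevelAux G ℓ (d + 1)) (hr : r ∈ (levelNFA G ℓ).step p a) :
    r ∈ LevelAux G ℓ d ∧ Parent r a = p := by
  obtain ⟨-, hr, hpar⟩ := hr
  rw [snd_eq_of_mem_levelAux hp, show ℓ - (ℓ - (d + 1) + 1) = d by omega] at hr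
  exact ⟨hr, hpar⟩

theorem disjoint_stateLang_levelNFA_of_mem_levelAux {d : ℕ} (hd : d ≤ ℓ)
    {p q : Set (List (Set α)) × ℕ} (hp : p ∈ LevelAux G ℓ d) (hq : q ∈ LevelAux G ℓ d)
    (hpq : p ≠ q) : Disjoint (stateLang (levelNFA G ℓ) p) (stateLang (levelNFA G ℓ) q) := by
  induction d generalizing p q with
  | zero =>
    rw [LevelAux, Set.mem_singleton_iff] at hp hq
    exact absurd (hp.trans hq.symm) hpq
  | succ d ih =>
    refine NFA.disjoint_stateLang_of_step _ (levelNFA_notMem_accept hd hq) fun a r hr r' hr' => ?_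
    obtain ⟨hrd, rfl⟩ := mem_levelAux_of_mem_levelNFA_step hd hp hr
    obtain ⟨hrd', rfl⟩ := mem_levelAux_of_mem_levelNFA_step hd hq hr'
    exact ih (by omega) hrd hrd' fun hrr' => hpq (hrr' ▸ rfl)

end LevelNFA

theorem levelNFA_levelwise_disjoint_general {α : Type} (G : Set (List (Set α))) (ℓ : ℕ) :
    ∀ i ≤ ℓ, ∀ p ∈ LevelAux G ℓ (ℓ - i), ∀ q ∈ LevelAux G ℓ (ℓ - i), p ≠ q →
      Disjoint (stateLang (levelNFA G ℓ) p) (stateLang (levelNFA G ℓ) q) :=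
  fun _ _ _ hp _ hq hpq => disjoint_stateLang_levelNFA_of_mem_levelAux (Nat.sub_le _ _) hp hq hpq

/-- In the level-wise NFA built from a finite nonempty set of generalized strings of
equal length `ℓ`, within each level `Q_i` the languages of distinct states are
pairwise disjoint. -/
theorem levelNFA_levelwise_disjoint {α : Type} (G : Set (List (Set α))) (ℓ : ℕ)
    (hfin : G.Finite) (hG : G.Nonempty)
    (hlen : ∀ g ∈ G, g.length = ℓ)
    (hne : ∀ g ∈ G, ∀ S ∈ g, S.Nonempty) :
    ∀ i ≤ ℓ, ∀ p ∈ LevelAux G ℓ (ℓ - i), ∀ q ∈ LevelAux G ℓ (ℓ - i), p ≠ q →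
      Disjoint (stateLang (levelNFA G ℓ) p) (stateLang (levelNFA G ℓ) q) :=
  levelNFA_levelwise_disjoint_general G ℓ
end

section
/- Let g be a generalized string and d_max ∈ ℕ. In the Hamming-neighborhood NFA built from (g, d_max), the language of state (e, k) is exactly the set of strings s of length |g| − k whose Hamming distance to the suffix of g starting at position k+1 is exactly e. -/
open List Set

/-- Hamming distance between a string `s` and a generalized string `h` of the same
length: the number of positions `i` with `s[i] ∉ h[i]`. -/
noncomputable def hamDist {α : Type} (s : List α) (h : List (Set α)) : ℕ :=
  Nat.card {i : Fin s.length // s.get i ∉ h.getD (i : ℕ) ∅}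

/-- The state space of the Hamming-neighborhood NFA for `(g, d)`:
pairs `(e, k)` with `0 ≤ e ≤ d`, `0 ≤ k ≤ |g|` and `|g| - k - e ≥ 0`. -/
def hamQ {α : Type} (g : List (Set α)) (d : ℕ) : Set (ℕ × ℕ) :=
  {p | p.1 ≤ d ∧ p.2 ≤ g.length ∧ p.1 + p.2 ≤ g.length}

/-- The Hamming-neighborhood NFA for a generalized string `g` and threshold `d`:
from `(e, k)` reading a matching character leads to `(e, k+1)`, a mismatching one to
`(e-1, k+1)`, clipped to the state space; start states `(e, 0)`, accepting state
`(0, |g|)`. -/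
def hamNFA {α : Type} (g : List (Set α)) (d : ℕ) : NFA α (ℕ × ℕ) where
  step p a := {q ∈ hamQ g d |
      (a ∈ g.getD p.2 ∅ ∧ q = (p.1, p.2 + 1)) ∨
      (a ∉ g.getD p.2 ∅ ∧ 0 < p.1 ∧ q = (p.1 - 1, p.2 + 1))}
  start := {p ∈ hamQ g d | p.2 = 0}
  accept := {(0, g.length)}

/-! Reading a character from `(e, k)` moves to `k + 1` and spends exactly the character's
mismatch with `g[k]` from the error budget `e`, and the only accepting state is `(0, |g|)`.
Hence, by induction on the string, a run from `(e, k)` accepts exactly when the string has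
`|g| - k` characters whose mismatches add up to `e`. The state-space bound `e + k ≤ |g|` never
cuts such a run off, since a Hamming distance is at most the length of the string. -/

section StateLang

variable {α σ : Type} (M : NFA α σ)

theorem nil_mem_stateLang (q : σ) : [] ∈ stateLang M q ↔ q ∈ M.accept := by
  simp [stateLang]

theorem cons_mem_stateLang (q : σ) (a : α) (s : List α) :
    a :: s ∈ stateLang M q ↔ ∃ q' ∈ M.step q a, s ∈ stateLang M q' := by
  change (M.evalFrom (M.stepSet {q} a) s ∩ M.accept).Nonempty ↔
    ∃ q' ∈ M.step q a, (M.evalFrom {q'} s ∩ M.accept).Nonempty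
  rw [NFA.stepSet_singleton]
  constructor
  · rintro ⟨x, hx, hacc⟩
    obtain ⟨q', hq', hx⟩ := NFA.mem_evalFrom_iff_exists.1 hx
    exact ⟨q', hq', x, hx, hacc⟩
  · rintro ⟨q', hq', x, hx, hacc⟩
    exact ⟨x, NFA.mem_evalFrom_iff_exists.2 ⟨q', hq', hx⟩, hacc⟩

end StateLang

section HamDist

variable {α : Type}

open Classical in
noncomputable def charDist (a : α) (S : Set α) : ℕ := if a ∈ S then 0 else 1

@[simp]
theorem hamDist_nil (h : List (Set α)) : hamDist [] h = 0 := by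
  simp [hamDist]

theorem hamDist_cons (a : α) (s : List α) (h : List (Set α)) :
    hamDist (a :: s) h = charDist a (h.getD 0 ∅) + hamDist s h.tail := by
  classical
  simp only [hamDist, Nat.card_eq_fintype_card, Fintype.card_subtype, Finset.card_filter,
    List.length_cons, Fin.sum_univ_succ]
  congr 1
  · simp [charDist]
  · simp only [Fin.val_succ, List.getD_eq_getElem?_getD, List.getElem?_tail]
    rfl

theorem hamDist_le_length (s : List α) (h : List (Set α)) : hamDist s h ≤ s.length :=
  (Finite.card_subtype_le _).trans (Nat.card_fin _).le

end HamDist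

section HamNFA

variable {α : Type} (g : List (Set α)) (d : ℕ)

theorem mem_hamNFA_step (e k : ℕ) (a : α) (q : ℕ × ℕ) :
    q ∈ (hamNFA g d).step (e, k) a ↔
      q ∈ hamQ g d ∧ charDist a (g.getD k ∅) ≤ e ∧ q = (e - charDist a (g.getD k ∅), k + 1) := by
  by_cases ha : a ∈ g.getD k ∅ <;>
    simp only [hamNFA, charDist, ha, Set.mem_sep_iff] <;> grind

theorem mem_stateLang_hamNFA (s : List α) (e k : ℕ) (hq : (e, k) ∈ hamQ g d) :
    s ∈ stateLang (hamNFA g d) (e, k) ↔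
      s.length = g.length - k ∧ hamDist s (g.drop k) = e := by
  induction s generalizing e k with
  | nil =>
    obtain ⟨-, hk, -⟩ := hq
    simp only [nil_mem_stateLang, hamNFA, Set.mem_singleton_iff, Prod.mk.injEq,
      List.length_nil, hamDist_nil]
    omega
  | cons a s ih =>
    set δ := charDist a (g.getD k ∅)
    have hhead : (g.drop k).getD 0 ∅ = g.getD k ∅ := by
      simp [List.getD_eq_getElem?_getD, List.getElem?_drop]
    have hlen := hamDist_le_length s (g.drop (k + 1))
    obtain ⟨he, -, -⟩ := hq
    rw [cons_mem_stateLang, hamDist_cons, hhead, List.tail_drop, List.length_cons]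
    simp only [mem_hamNFA_step]
    constructor
    · rintro ⟨_, ⟨hq', hδ, rfl⟩, hs⟩
      obtain ⟨hs_len, hs_dist⟩ := (ih _ _ hq').1 hs
      obtain ⟨-, hk, -⟩ := hq'
      omega
    · rintro ⟨hs_len, hs_dist⟩
      have hq' : (e - δ, k + 1) ∈ hamQ g d := ⟨by omega, by omega, by omega⟩
      exact ⟨_, ⟨hq', by omega, rfl⟩, (ih _ _ hq').2 ⟨by omega, by omega⟩⟩

end HamNFA

theorem hamNFA_stateLang_general {α : Type} (g : List (Set α)) (d : ℕ) :
    ∀ e k : ℕ, (e, k) ∈ hamQ g d →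
      stateLang (hamNFA g d) (e, k) =
        {s : List α | s.length = g.length - k ∧ hamDist s (g.drop k) = e} :=
  fun e k hq => Set.ext fun s => mem_stateLang_hamNFA g d s e k hq

/-- In the Hamming-neighborhood NFA for `(g, d)`, the language of state `(e, k)` is
exactly the set of strings of length `|g| - k` whose Hamming distance to the suffix
of `g` starting at position `k + 1` is exactly `e`. -/
theorem hamNFA_stateLang {α : Type} (g : List (Set α)) (d : ℕ)
    (hne : ∀ S ∈ g, S.Nonempty) :
    ∀ e k : ℕ, (e, k) ∈ hamQ g d →
      stateLang (hamNFA g d) (e, k) =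
        {s : List α | s.length = g.length - k ∧ hamDist s (g.drop k) = e} :=
  hamNFA_stateLang_general g d
end
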